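/- Let U = I₁ × I₂ × I₃ ⊆ ℝ³ be a product of open intervals and let F : U → ℝ be a C² function with ∂F/∂x₁ ≠ 0 and ∂F/∂x₂ ≠ 0 on U. Then every point of U has an open neighborhood on which F admits a decomposition F(x₁,x₂,x₃) = g(h(x₁,x₂), x₃) for some C² functions h of two variables and g of two variables if and only if F satisfies on U the second-order nonlinear partial differential equation F₃₁·F₂ = F₃₂·F₁ (i.e., F₃₁/F₃₂ = F₁/F₂), where F_i = ∂F/∂x_i and F_{3i} = ∂²F/∂x₃∂x_i. -/

import Mathlib

/-!
If `F(x₁,x₂,x₃) = g(h(x₁,x₂),x₃)`, then `F₁ = h₁ · ∂₁g(h,x₃)` and `F₂ = h₂ · ∂₁g(h,x₃)`, and since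
`h₁, h₂` do not depend on `x₃`, both `F₃₁ F₂` and `F₃₂ F₁` equal `h₁ h₂ · ∂₁g · ∂₂∂₁g`.

Conversely, the equation says `(F₁/F₂)₃ = 0`, so on each line parallel to the `x₃`-axis the
ratio `F₁ : F₂` is that of `h := F(·,·,a₃)`: every slice `F(·,·,x₃)` has gradient parallel to
that of `h`. Straightening `h` by the inverse function theorem, i.e. using `(x₁, h)` as
coordinates near `(a₁,a₂)`, `F` no longer depends on the first coordinate, hence is a function
`g` of `(h, x₃)`. Bump functions then make `h` and `g` globally `C²`.
-/

open Filter Topology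

theorem ContDiffAt.exists_contDiff_eventuallyEq {E F : Type*} [NormedAddCommGroup E]
    [NormedSpace ℝ E] [HasContDiffBump E] [NormedAddCommGroup F] [NormedSpace ℝ F]
    {n : ℕ} {f : E → F} {x : E} (hf : ContDiffAt ℝ n f x) :
    ∃ g : E → F, ContDiff ℝ n g ∧ g =ᶠ[𝓝 x] f := by
  obtain ⟨ε, hε, hball⟩ := Metric.eventually_nhds_iff_ball.1 (hf.eventually (by simp))
  let β : ContDiffBump x := ⟨ε / 4, ε / 2, by positivity, by linarith⟩
  refine ⟨fun y => β y • f y, contDiff_iff_contDiffAt.2 fun y => ?_, ?_⟩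
  · by_cases hy : y ∈ Metric.ball x ε
    · exact (β.contDiffAt (n := n)).smul (hball y hy)
    · have hβ : (β : E → ℝ) =ᶠ[𝓝 y] 0 := by
        rw [← notMem_tsupport_iff_eventuallyEq, β.tsupport_eq]
        exact fun h => hy (Metric.closedBall_subset_ball (half_lt_self hε) h)
      refine (contDiffAt_const (c := (0 : F))).congr_of_eventuallyEq ?_
      filter_upwards [hβ] with z hz
      simp [hz]
  · filter_upwards [β.eventuallyEq_one] with y hy
    simp [hy]

theorem eq_of_hasDerivAt_eq_zero {F : Type*} [NormedAddCommGroup F] [NormedSpace ℝ F]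
    {s : Set ℝ} {f : ℝ → F} (hs : IsOpen s) (hs' : s.OrdConnected)
    (hf : ∀ t ∈ s, HasDerivAt f 0 t) {x y : ℝ} (hx : x ∈ s) (hy : y ∈ s) : f x = f y :=
  hs.is_const_of_deriv_eq_zero hs'.isPreconnected
    (fun t ht => (hf t ht).differentiableAt.differentiableWithinAt)
    (fun t ht => (hf t ht).deriv) hx hy

theorem eventually_eq_of_hasDerivAt_fst_eq_zero {X F : Type*} [TopologicalSpace X]
    [NormedAddCommGroup F] [NormedSpace ℝ F] {f : ℝ × X → F} {p₀ : ℝ × X}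
    (hf : ∀ᶠ p in 𝓝 p₀, HasDerivAt (fun t => f (t, p.2)) 0 p.1) :
    ∀ᶠ p in 𝓝 p₀, f p = f (p₀.1, p.2) := by
  rw [nhds_prod_eq] at hf ⊢
  obtain ⟨P, hP, Q, hQ, hPQ⟩ := Filter.eventually_prod_iff.1 hf
  obtain ⟨ε, hε, hPε⟩ := Metric.eventually_nhds_iff_ball.1 hP
  filter_upwards [prod_mem_prod (Metric.ball_mem_nhds p₀.1 hε) hQ] with p ⟨hp₁, hp₂⟩
  exact eq_of_hasDerivAt_eq_zero (f := fun t => f (t, p.2)) Metric.isOpen_ball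
    (convex_ball _ _).ordConnected (fun t ht => hPQ (hPε t ht) hp₂) hp₁
    (Metric.mem_ball_self hε)

theorem mul_eq_mul_of_hasDerivAt {s : Set ℝ} (hs : IsOpen s) (hs' : s.OrdConnected)
    {f g f' g' : ℝ → ℝ} (hf : ∀ t ∈ s, HasDerivAt f (f' t) t)
    (hg : ∀ t ∈ s, HasDerivAt g (g' t) t) (hg₀ : ∀ t ∈ s, g t ≠ 0)
    (hfg : ∀ t ∈ s, f' t * g t = g' t * f t) {x y : ℝ} (hx : x ∈ s) (hy : y ∈ s) :
    f x * g y = g x * f y := by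
  have hquot : ∀ t ∈ s, HasDerivAt (fun t => f t / g t) 0 t := fun t ht => by
    have hdiv := (hf t ht).div (hg t ht) (hg₀ t ht)
    rwa [hfg t ht, mul_comm (f t), sub_self, zero_div] at hdiv
  have hxy := eq_of_hasDerivAt_eq_zero hs hs' hquot hx hy
  rw [div_eq_div_iff (hg₀ x hx) (hg₀ y hy)] at hxy
  linarith

theorem isInvertible_fst_prod {L : ℝ × ℝ →L[ℝ] ℝ} (hL : L (0, 1) ≠ 0) :
    ((ContinuousLinearMap.fst ℝ ℝ ℝ).prod L).IsInvertible := by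
  set A := (ContinuousLinearMap.fst ℝ ℝ ℝ).prod L
  have hA : Function.Injective A := by
    refine (injective_iff_map_eq_zero A).2 fun v hv => ?_
    have hv₁ : v.1 = 0 := congrArg Prod.fst hv
    have hv₂ : v.2 * L (0, 1) = 0 := by
      have hLv : L v = 0 := congrArg Prod.snd hv
      rwa [show v = v.2 • ((0 : ℝ), (1 : ℝ)) by ext <;> simp [hv₁], map_smul,
        smul_eq_mul] at hLv
    exact Prod.ext hv₁ ((mul_eq_zero.1 hv₂).resolve_right hL)
  exact ⟨(LinearEquiv.ofInjectiveEndo (A : ℝ × ℝ →ₗ[ℝ] ℝ × ℝ) hA).toContinuousLinearEquiv,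
    rfl⟩

section FunctionalDependence

variable {E : Type*} [NormedAddCommGroup E] [NormedSpace ℝ E]

theorem hasDerivAt_comp_rightInverse_eq_zero {K : (ℝ × ℝ) × E → ℝ} {w₀ w : E}
    {Ψ : ℝ × ℝ → ℝ × ℝ} {t c : ℝ} (hΨ : DifferentiableAt ℝ Ψ (t, c))
    (hright : ∀ᶠ z in 𝓝 (t, c), K (Ψ z, w₀) = z.2)
    (hK₀ : DifferentiableAt ℝ K (Ψ (t, c), w₀)) (hK : DifferentiableAt ℝ K (Ψ (t, c), w))
    (hker : ∀ v : ℝ × ℝ, fderiv ℝ K (Ψ (t, c), w₀) (v, 0) = 0 →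
      fderiv ℝ K (Ψ (t, c), w) (v, 0) = 0) :
    HasDerivAt (fun s => K (Ψ (s, c), w)) 0 t := by
  set v := fderiv ℝ Ψ (t, c) (1, 0)
  have hline : HasDerivAt (fun s : ℝ => ((s, c) : ℝ × ℝ)) (1, 0) t :=
    (hasDerivAt_id t).prodMk (hasDerivAt_const t c)
  have hcurve : HasDerivAt (fun s => (Ψ (s, c), w)) (v, 0) t :=
    (hΨ.hasFDerivAt.comp_hasDerivAt t hline).prodMk (hasDerivAt_const t w)
  have hslice : HasFDerivAt (fun z => K (Ψ z, w₀))
      ((fderiv ℝ K (Ψ (t, c), w₀)).comp ((fderiv ℝ Ψ (t, c)).prod 0)) (t, c) :=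
    hK₀.hasFDerivAt.comp (t, c) (hΨ.hasFDerivAt.prodMk (hasFDerivAt_const w₀ (t, c)))
  -- differentiating `K (Ψ z, w₀) = z.2` in the direction `(1, 0)`
  have hv : fderiv ℝ K (Ψ (t, c), w₀) (v, 0) = 0 := by
    have := (hslice.congr_of_eventuallyEq (f₁ := Prod.snd)
      (hright.mono fun z hz => hz.symm)).unique hasFDerivAt_snd
    simpa [v] using congrArg (fun L => L ((1 : ℝ), (0 : ℝ))) this
  have hcomp := hK.hasFDerivAt.comp_hasDerivAt t hcurve
  rwa [hker v hv] at hcomp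

theorem eventually_comp_rightInverse_eq {K : (ℝ × ℝ) × E → ℝ} {q₀ : ℝ × ℝ} {w₀ : E}
    {Ψ : ℝ × ℝ → ℝ × ℝ} {b : ℝ × ℝ} (hΨ : Tendsto Ψ (𝓝 b) (𝓝 q₀))
    (hΨd : ∀ᶠ z in 𝓝 b, DifferentiableAt ℝ Ψ z) (hright : ∀ᶠ z in 𝓝 b, K (Ψ z, w₀) = z.2)
    (hK : ∀ᶠ p in 𝓝 (q₀, w₀), DifferentiableAt ℝ K p)
    (hker : ∀ᶠ p in 𝓝 (q₀, w₀), ∀ v : ℝ × ℝ,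
      fderiv ℝ K (p.1, w₀) (v, 0) = 0 → fderiv ℝ K p (v, 0) = 0) :
    ∀ᶠ p in 𝓝 (b.1, (b.2, w₀)), K (Ψ (p.1, p.2.1), p.2.2) = K (Ψ (b.1, p.2.1), p.2.2) := by
  refine eventually_eq_of_hasDerivAt_fst_eq_zero
    (f := fun p : ℝ × (ℝ × E) => K (Ψ (p.1, p.2.1), p.2.2)) ?_
  have hz : Tendsto (fun p : ℝ × (ℝ × E) => (p.1, p.2.1)) (𝓝 (b.1, (b.2, w₀))) (𝓝 b) :=
    (continuous_fst.prodMk (continuous_fst.comp continuous_snd)).tendsto _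
  have hp : Tendsto (fun p : ℝ × (ℝ × E) => (Ψ (p.1, p.2.1), p.2.2))
      (𝓝 (b.1, (b.2, w₀))) (𝓝 (q₀, w₀)) :=
    (hΨ.comp hz).prodMk_nhds ((continuous_snd.comp continuous_snd).tendsto _)
  have hp₀ : Tendsto (fun p : ℝ × (ℝ × E) => (Ψ (p.1, p.2.1), w₀))
      (𝓝 (b.1, (b.2, w₀))) (𝓝 (q₀, w₀)) :=
    (hΨ.comp hz).prodMk_nhds tendsto_const_nhds
  filter_upwards [hz.eventually hΨd, hz.eventually hright.eventually_nhds, hp.eventually hK,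
    hp₀.eventually hK, hp.eventually hker] with p hΨp hrightp hKp hK₀p hkerp
  exact hasDerivAt_comp_rightInverse_eq_zero hΨp hrightp hK₀p hKp hkerp

theorem exists_eventuallyEq_comp_of_ker {n : WithTop ℕ∞} {K : (ℝ × ℝ) × E → ℝ} {q₀ : ℝ × ℝ}
    {w₀ : E} (hK : ContDiffAt ℝ n K (q₀, w₀)) (hn : 1 ≤ n)
    (h₂ : fderiv ℝ K (q₀, w₀) ((0, 1), 0) ≠ 0)
    (hker : ∀ᶠ p in 𝓝 (q₀, w₀), ∀ v : ℝ × ℝ,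
      fderiv ℝ K (p.1, w₀) (v, 0) = 0 → fderiv ℝ K p (v, 0) = 0) :
    ∃ g : ℝ × E → ℝ, ContDiffAt ℝ n g (K (q₀, w₀), w₀) ∧
      ∀ᶠ p in 𝓝 (q₀, w₀), K p = g (K (p.1, w₀), p.2) := by
  set h₀ : ℝ × ℝ → ℝ := fun q => K (q, w₀)
  set Φ : ℝ × ℝ → ℝ × ℝ := fun q => (q.1, h₀ q)
  have hh₀ : ContDiffAt ℝ n h₀ q₀ := hK.comp q₀ (contDiffAt_id.prodMk contDiffAt_const)
  have hK₁ : ∀ᶠ p in 𝓝 (q₀, w₀), DifferentiableAt ℝ K p :=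
    ((hK.of_le hn).eventually (by simp)).mono fun p hp => hp.differentiableAt one_ne_zero
  have hΦ : ContDiffAt ℝ n Φ q₀ := contDiffAt_fst.prodMk hh₀
  obtain ⟨A, hA⟩ := isInvertible_fst_prod
    (L := (fderiv ℝ K (q₀, w₀)).comp (ContinuousLinearMap.inl ℝ (ℝ × ℝ) E)) h₂
  have hΦ' : HasFDerivAt Φ (A : ℝ × ℝ →L[ℝ] ℝ × ℝ) q₀ := hA ▸
    hasFDerivAt_fst.prodMk (hK₁.self_of_nhds.hasFDerivAt.comp q₀ (hasFDerivAt_prodMk_left q₀ w₀))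
  have hn₀ : n ≠ 0 := (zero_lt_one.trans_le hn).ne'
  set Ψ := hΦ.localInverse hΦ' hn₀
  have hΨ : ContDiffAt ℝ n Ψ (Φ q₀) := hΦ.to_localInverse hΦ' hn₀
  have hΨq₀ : Ψ (Φ q₀) = q₀ := hΦ.localInverse_apply_image hΦ' hn₀
  have hΨΦ : ∀ᶠ q in 𝓝 q₀, Ψ (Φ q) = q :=
    (hΦ.hasStrictFDerivAt' hΦ' hn₀).eventually_left_inverse
  have hΦΨ : ∀ᶠ z in 𝓝 (Φ q₀), Φ (Ψ z) = z :=
    (hΦ.hasStrictFDerivAt' hΦ' hn₀).eventually_right_inverse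
  have hΨt : Tendsto Ψ (𝓝 (Φ q₀)) (𝓝 q₀) := by
    simpa only [hΨq₀] using hΨ.continuousAt.tendsto
  have hconst := eventually_comp_rightInverse_eq hΨt
    (((hΨ.of_le hn).eventually (by simp)).mono fun z hz => hz.differentiableAt one_ne_zero)
    (hΦΨ.mono fun z hz => congrArg Prod.snd hz) hK₁ hker
  refine ⟨fun c => K (Ψ ((Φ q₀).1, c.1), c.2), ?_, ?_⟩
  · have hKΨ : ContDiffAt ℝ n K (Ψ (Φ q₀), w₀) := by rwa [hΨq₀]
    exact hKΨ.comp (h₀ q₀, w₀)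
      ((hΨ.comp (g := Ψ) (h₀ q₀, w₀) (contDiffAt_const.prodMk contDiffAt_fst)).prodMk
        contDiffAt_snd)
  · have hh₀p : ContinuousAt (fun p : (ℝ × ℝ) × E => h₀ p.1) (q₀, w₀) :=
      hh₀.continuousAt.comp (g := h₀) (f := Prod.fst) continuousAt_fst
    have hμ : Tendsto (fun p : (ℝ × ℝ) × E => (p.1.1, (h₀ p.1, p.2))) (𝓝 (q₀, w₀))
        (𝓝 ((Φ q₀).1, ((Φ q₀).2, w₀))) :=
      (continuousAt_fst.fst.prodMk (hh₀p.prodMk continuousAt_snd)).tendsto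
    filter_upwards [hμ.eventually hconst, (continuous_fst.tendsto (q₀, w₀)).eventually hΨΦ]
      with p hp hΨp
    calc K p = K (Ψ (Φ p.1), p.2) := by rw [hΨp]
      _ = _ := hp

end FunctionalDependence

/-- `F₃₁ F₂ = F₃₂ F₁` at `x`, the coordinates `x₁, x₂, x₃` being indexed by `0, 1, 2`. -/
def ReducibilityPDE (F : (Fin 3 → ℝ) → ℝ) (x : Fin 3 → ℝ) : Prop :=
  fderiv ℝ (fun y => fderiv ℝ F y (Pi.single 0 1)) x (Pi.single 2 1) *
      fderiv ℝ F x (Pi.single 1 1) =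
    fderiv ℝ (fun y => fderiv ℝ F y (Pi.single 1 1)) x (Pi.single 2 1) *
      fderiv ℝ F x (Pi.single 0 1)

noncomputable def planeProj : (Fin 3 → ℝ) →L[ℝ] ℝ × ℝ :=
  (ContinuousLinearMap.proj 0).prod (ContinuousLinearMap.proj 1)

@[simp] theorem planeProj_apply (y : Fin 3 → ℝ) : planeProj y = (y 0, y 1) := rfl

theorem fderiv_apply_of_eventuallyEq_comp {F : (Fin 3 → ℝ) → ℝ} {y : Fin 3 → ℝ}
    {h g : ℝ × ℝ → ℝ} (hh : DifferentiableAt ℝ h (y 0, y 1))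
    (hg : DifferentiableAt ℝ g (h (y 0, y 1), y 2))
    (heq : F =ᶠ[𝓝 y] fun y => g (h (y 0, y 1), y 2)) {v : Fin 3 → ℝ} (hv : v 2 = 0) :
    fderiv ℝ F y v = fderiv ℝ h (y 0, y 1) (v 0, v 1) * fderiv ℝ g (h (y 0, y 1), y 2) (1, 0) := by
  have hG : HasFDerivAt (fun y => g (h (y 0, y 1), y 2))
      ((fderiv ℝ g _).comp (((fderiv ℝ h (y 0, y 1)).comp planeProj).prod
        (ContinuousLinearMap.proj 2))) y :=
    hg.hasFDerivAt.comp y ((hh.hasFDerivAt.comp y planeProj.hasFDerivAt).prodMk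
      (ContinuousLinearMap.proj (R := ℝ) (φ := fun _ : Fin 3 => ℝ) 2).hasFDerivAt)
  have hpair (c : ℝ) : ((c, 0) : ℝ × ℝ) = c • ((1 : ℝ), (0 : ℝ)) := by simp
  rw [heq.fderiv_eq, hG.fderiv]
  simp only [ContinuousLinearMap.comp_apply, ContinuousLinearMap.prod_apply, planeProj_apply,
    ContinuousLinearMap.proj_apply, hv]
  rw [hpair, map_smul, smul_eq_mul]

theorem reducibilityPDE_of_eventuallyEq_comp {F : (Fin 3 → ℝ) → ℝ} {x : Fin 3 → ℝ}
    {h g : ℝ × ℝ → ℝ}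
    (hh : ContDiff ℝ 2 h) (hg : ContDiff ℝ 2 g)
    (heq : F =ᶠ[𝓝 x] fun y => g (h (y 0, y 1), y 2)) : ReducibilityPDE F x := by
  set k : (Fin 3 → ℝ) → ℝ := fun y => fderiv ℝ g (h (y 0, y 1), y 2) (1, 0)
  have hFv : ∀ v : Fin 3 → ℝ, v 2 = 0 →
      (fun y => fderiv ℝ F y v) =ᶠ[𝓝 x] fun y => fderiv ℝ h (planeProj y) (planeProj v) * k y :=
    fun v hv => by
      filter_upwards [heq.eventuallyEq_nhds] with y hy
      exact fderiv_apply_of_eventuallyEq_comp (hh.differentiable two_ne_zero _)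
        (hg.differentiable two_ne_zero _) hy hv
  have hk : DifferentiableAt ℝ k x := by
    have hinner : ContDiff ℝ 1 fun y : Fin 3 → ℝ => (h (y 0, y 1), y 2) :=
      ((hh.comp planeProj.contDiff).prodMk (contDiff_apply ℝ ℝ 2)).of_le one_le_two
    exact (((hg.fderiv_right (m := 1) le_rfl).clm_apply contDiff_const).comp
      hinner).differentiable one_ne_zero x
  have hF3v : ∀ v : Fin 3 → ℝ, v 2 = 0 →
      fderiv ℝ (fun y => fderiv ℝ F y v) x (Pi.single 2 1) =
        fderiv ℝ h (planeProj x) (planeProj v) * fderiv ℝ k x (Pi.single 2 1) := by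
    intro v hv
    have hφ : HasFDerivAt (fun y => fderiv ℝ h (planeProj y) (planeProj v))
        ((fderiv ℝ (fun q => fderiv ℝ h q (planeProj v)) (planeProj x)).comp planeProj) x :=
      ((((hh.fderiv_right (m := 1) le_rfl).clm_apply contDiff_const).differentiable one_ne_zero
        _).hasFDerivAt).comp x planeProj.hasFDerivAt
    rw [(hFv v hv).fderiv_eq, (hφ.fun_mul hk.hasFDerivAt).fderiv]
    simp [Prod.mk_zero_zero]
  have he₀ : (Pi.single 0 1 : Fin 3 → ℝ) 2 = 0 := by simp
  have he₁ : (Pi.single 1 1 : Fin 3 → ℝ) 2 = 0 := by simp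
  rw [ReducibilityPDE, hF3v _ he₀, hF3v _ he₁, (hFv _ he₀).eq_of_nhds, (hFv _ he₁).eq_of_nhds]
  ring

noncomputable def prodToFin3 : (ℝ × ℝ) × ℝ →L[ℝ] (Fin 3 → ℝ) :=
  ContinuousLinearMap.pi
    ![(ContinuousLinearMap.fst ℝ ℝ ℝ).comp (ContinuousLinearMap.fst ℝ (ℝ × ℝ) ℝ),
      (ContinuousLinearMap.snd ℝ ℝ ℝ).comp (ContinuousLinearMap.fst ℝ (ℝ × ℝ) ℝ),
      ContinuousLinearMap.snd ℝ (ℝ × ℝ) ℝ]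

@[simp] theorem prodToFin3_apply (p : (ℝ × ℝ) × ℝ) :
    prodToFin3 p = ![p.1.1, p.1.2, p.2] := by
  ext i; fin_cases i <;> rfl

theorem prodToFin3_planeProj (y : Fin 3 → ℝ) : prodToFin3 ((y 0, y 1), y 2) = y := by
  ext i; fin_cases i <;> rfl

theorem fderiv_comp_prodToFin3_apply {F : (Fin 3 → ℝ) → ℝ} {p : (ℝ × ℝ) × ℝ}
    (hF : DifferentiableAt ℝ F (prodToFin3 p)) (v : ℝ × ℝ) :
    fderiv ℝ (fun p => F (prodToFin3 p)) p (v, 0) =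
      v.1 * fderiv ℝ F (prodToFin3 p) (Pi.single 0 1) +
        v.2 * fderiv ℝ F (prodToFin3 p) (Pi.single 1 1) := by
  have hv : prodToFin3 (v, 0) = v.1 • Pi.single 0 1 + v.2 • Pi.single 1 1 := by
    ext i; fin_cases i <;> simp
  rw [fderiv_fun_comp p hF prodToFin3.differentiableAt, prodToFin3.fderiv,
    ContinuousLinearMap.comp_apply, hv]
  simp

section Product

variable {I : Fin 3 → Set ℝ} {U : Set (Fin 3 → ℝ)}

theorem prodToFin3_mem_of_mem (hU : U = {x | ∀ i, x i ∈ I i}) {q : ℝ × ℝ} {w t : ℝ}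
    (hw : prodToFin3 (q, w) ∈ U) (ht : t ∈ I 2) : prodToFin3 (q, t) ∈ U := by
  subst hU
  intro i
  fin_cases i
  exacts [hw 0, hw 1, ht]

variable {F : (Fin 3 → ℝ) → ℝ}

theorem fderiv_mul_fderiv_eq_of_pde (hI : IsOpen (I 2)) (hI' : (I 2).OrdConnected)
    (hU : U = {x | ∀ i, x i ∈ I i}) (hUopen : IsOpen U) (hF : ContDiffOn ℝ 2 F U)
    (h2 : ∀ x ∈ U, fderiv ℝ F x (Pi.single 1 1) ≠ 0)
    (hpde : ∀ x ∈ U, ReducibilityPDE F x)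
    {q : ℝ × ℝ} {w w' : ℝ} (hw : prodToFin3 (q, w) ∈ U) (hw' : w' ∈ I 2) :
    fderiv ℝ F (prodToFin3 (q, w)) (Pi.single 0 1) *
        fderiv ℝ F (prodToFin3 (q, w')) (Pi.single 1 1) =
      fderiv ℝ F (prodToFin3 (q, w)) (Pi.single 1 1) *
        fderiv ℝ F (prodToFin3 (q, w')) (Pi.single 0 1) := by
  have hmem : ∀ t ∈ I 2, prodToFin3 (q, t) ∈ U := fun t ht => prodToFin3_mem_of_mem hU hw ht
  have hline (t : ℝ) : HasDerivAt (fun t => prodToFin3 (q, t)) (Pi.single 2 1) t := by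
    have hderiv := prodToFin3.hasFDerivAt.comp_hasDerivAt t
      ((hasDerivAt_const t q).prodMk (hasDerivAt_id t))
    have he₂ : prodToFin3 (0, 1) = Pi.single 2 1 := by ext i; fin_cases i <;> simp
    rw [he₂] at hderiv
    exact hderiv
  have hpartial (i : Fin 3) (t : ℝ) (ht : t ∈ I 2) :
      HasDerivAt (fun t => fderiv ℝ F (prodToFin3 (q, t)) (Pi.single i 1))
        (fderiv ℝ (fun y => fderiv ℝ F y (Pi.single i 1)) (prodToFin3 (q, t))
          (Pi.single 2 1)) t := by
    have hFt := hF.contDiffAt (hUopen.mem_nhds (hmem t ht))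
    exact ((((hFt.fderiv_right (m := 1) le_rfl).clm_apply contDiffAt_const).differentiableAt
      one_ne_zero).hasFDerivAt).comp_hasDerivAt t (hline t)
  have hw₂ : w ∈ I 2 := by subst hU; exact hw 2
  exact mul_eq_mul_of_hasDerivAt hI hI' (hpartial 0) (hpartial 1)
    (fun t ht => h2 _ (hmem t ht)) (fun t ht => hpde _ (hmem t ht)) hw₂ hw'

theorem fderiv_comp_prodToFin3_eq_zero_of_pde (hI : IsOpen (I 2)) (hI' : (I 2).OrdConnected)
    (hU : U = {x | ∀ i, x i ∈ I i}) (hUopen : IsOpen U) (hF : ContDiffOn ℝ 2 F U)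
    (h2 : ∀ x ∈ U, fderiv ℝ F x (Pi.single 1 1) ≠ 0)
    (hpde : ∀ x ∈ U, ReducibilityPDE F x)
    {q : ℝ × ℝ} {w w' : ℝ} (hw : prodToFin3 (q, w) ∈ U) (hw' : w' ∈ I 2) {v : ℝ × ℝ}
    (hv : fderiv ℝ (fun p => F (prodToFin3 p)) (q, w') (v, 0) = 0) :
    fderiv ℝ (fun p => F (prodToFin3 p)) (q, w) (v, 0) = 0 := by
  have hFd : ∀ y ∈ U, DifferentiableAt ℝ F y := fun y hy =>
    (hF.contDiffAt (hUopen.mem_nhds hy)).differentiableAt two_ne_zero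
  have hw'U : prodToFin3 (q, w') ∈ U := prodToFin3_mem_of_mem hU hw hw'
  have hratio := fderiv_mul_fderiv_eq_of_pde hI hI' hU hUopen hF h2 hpde hw hw'
  rw [fderiv_comp_prodToFin3_apply (hFd _ hw'U)] at hv
  rw [fderiv_comp_prodToFin3_apply (hFd _ hw)]
  -- multiply the claim by `F₂` at `(q, w')`
  refine (mul_eq_zero.1 ?_).resolve_right (h2 _ hw'U)
  linear_combination v.1 * hratio + fderiv ℝ F (prodToFin3 (q, w)) (Pi.single 1 1) * hv

theorem exists_eventuallyEq_comp_of_pde (hI : IsOpen (I 2)) (hI' : (I 2).OrdConnected)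
    (hU : U = {x | ∀ i, x i ∈ I i}) (hUopen : IsOpen U) (hF : ContDiffOn ℝ 2 F U)
    (h2 : ∀ x ∈ U, fderiv ℝ F x (Pi.single 1 1) ≠ 0)
    (hpde : ∀ x ∈ U, ReducibilityPDE F x)
    {a : Fin 3 → ℝ} (ha : a ∈ U) :
    ∃ h g : ℝ × ℝ → ℝ, ContDiff ℝ 2 h ∧ ContDiff ℝ 2 g ∧
      ∀ᶠ y in 𝓝 a, F y = g (h (y 0, y 1), y 2) := by
  set K : (ℝ × ℝ) × ℝ → ℝ := fun p => F (prodToFin3 p)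
  set p₀ : (ℝ × ℝ) × ℝ := ((a 0, a 1), a 2)
  have hp₀ : prodToFin3 p₀ = a := prodToFin3_planeProj a
  have hFd : ∀ y ∈ U, DifferentiableAt ℝ F y := fun y hy =>
    (hF.contDiffAt (hUopen.mem_nhds hy)).differentiableAt two_ne_zero
  have hK : ContDiffAt ℝ 2 K p₀ := by
    have hFa : ContDiffAt ℝ 2 F (prodToFin3 p₀) := hp₀ ▸ hF.contDiffAt (hUopen.mem_nhds ha)
    exact hFa.comp p₀ prodToFin3.contDiff.contDiffAt
  have h₂ : fderiv ℝ K p₀ ((0, 1), 0) ≠ 0 := by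
    rw [fderiv_comp_prodToFin3_apply (hFd _ (hp₀ ▸ ha)), hp₀]
    simpa using h2 a ha
  have hker : ∀ᶠ p in 𝓝 p₀, ∀ v : ℝ × ℝ,
      fderiv ℝ K (p.1, a 2) (v, 0) = 0 → fderiv ℝ K p (v, 0) = 0 := by
    have hU' : ∀ᶠ p in 𝓝 p₀, prodToFin3 p ∈ U :=
      prodToFin3.continuous.continuousAt.preimage_mem_nhds (hp₀ ▸ hUopen.mem_nhds ha)
    have ha₂ : a 2 ∈ I 2 := by subst hU; exact ha 2
    filter_upwards [hU'] with p hp v hv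
    exact fderiv_comp_prodToFin3_eq_zero_of_pde hI hI' hU hUopen hF h2 hpde hp ha₂ hv
  obtain ⟨g₀, hg₀, hKg₀⟩ := exists_eventuallyEq_comp_of_ker hK one_le_two h₂ hker
  have hh₀ : ContDiffAt ℝ 2 (fun q => K (q, a 2)) (a 0, a 1) :=
    hK.comp (g := K) (a 0, a 1) (contDiffAt_id.prodMk contDiffAt_const)
  obtain ⟨h, hh, hhh₀⟩ := hh₀.exists_contDiff_eventuallyEq (n := 2)
  obtain ⟨g, hg, hgg₀⟩ := hg₀.exists_contDiff_eventuallyEq (n := 2)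
  refine ⟨h, g, hh, hg, ?_⟩
  have hsplit : Tendsto (fun y : Fin 3 → ℝ => ((y 0, y 1), y 2)) (𝓝 a) (𝓝 p₀) :=
    (((continuous_apply 0).prodMk (continuous_apply 1)).prodMk (continuous_apply 2)).tendsto a
  have hplane : Tendsto (fun y : Fin 3 → ℝ => (y 0, y 1)) (𝓝 a) (𝓝 (a 0, a 1)) :=
    ((continuous_apply 0).prodMk (continuous_apply 1)).tendsto a
  have hinner : Tendsto (fun y : Fin 3 → ℝ => (K ((y 0, y 1), a 2), y 2)) (𝓝 a)
      (𝓝 (K p₀, a 2)) :=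
    (hh₀.continuousAt.tendsto.comp hplane).prodMk_nhds ((continuous_apply 2).tendsto a)
  filter_upwards [hsplit.eventually hKg₀, hplane.eventually hhh₀, hinner.eventually hgg₀]
    with y hy hhy hgy
  rw [hhy, hgy, ← hy]
  exact (congrArg F (prodToFin3_planeProj y)).symm

end Product

theorem stmt_7_general
    (I : Fin 3 → Set ℝ) (hIopen : ∀ i, IsOpen (I i))
    (hIconn : ∀ i, (I i).OrdConnected)
    (U : Set (Fin 3 → ℝ)) (hU : U = {x | ∀ i, x i ∈ I i})
    (F : (Fin 3 → ℝ) → ℝ) (hFsm : ContDiffOn ℝ 2 F U)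
    (h2 : ∀ x ∈ U, fderiv ℝ F x (Pi.single 1 1) ≠ 0) :
    (∀ x ∈ U, ∃ V : Set (Fin 3 → ℝ), IsOpen V ∧ x ∈ V ∧ V ⊆ U ∧
        ∃ h g : ℝ × ℝ → ℝ, ContDiff ℝ 2 h ∧ ContDiff ℝ 2 g ∧
          ∀ y ∈ V, F y = g (h (y 0, y 1), y 2)) ↔
      (∀ x ∈ U,
        fderiv ℝ (fun y => fderiv ℝ F y (Pi.single 0 1)) x (Pi.single 2 1) *
            fderiv ℝ F x (Pi.single 1 1) =
          fderiv ℝ (fun y => fderiv ℝ F y (Pi.single 1 1)) x (Pi.single 2 1) *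
            fderiv ℝ F x (Pi.single 0 1)) := by
  have hUopen : IsOpen U := by
    have hpi : IsOpen (Set.univ.pi I) := isOpen_set_pi Set.finite_univ fun i _ => hIopen i
    simpa [hU, Set.pi] using hpi
  constructor
  · intro hdec x hx
    obtain ⟨V, hVopen, hxV, -, h, g, hh, hg, hFV⟩ := hdec x hx
    exact reducibilityPDE_of_eventuallyEq_comp hh hg
      (eventually_of_mem (hVopen.mem_nhds hxV) hFV)
  · intro hpde x hx
    obtain ⟨h, g, hh, hg, hFx⟩ :=
      exists_eventuallyEq_comp_of_pde (hIopen 2) (hIconn 2) hU hUopen hFsm h2 hpde hx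
    obtain ⟨V, hFV, hVopen, hxV⟩ := eventually_nhds_iff.1 hFx
    exact ⟨V ∩ U, hVopen.inter hUopen, ⟨hxV, hx⟩, Set.inter_subset_right, h, g, hh, hg,
      fun y hy => hFV y hy.1⟩

/-- Goldberg/Goursat: A C² function `F` on a product
`U = I₁ × I₂ × I₃` of open intervals with `∂F/∂x₁ ≠ 0` and `∂F/∂x₂ ≠ 0` on `U`
admits, locally around every point of `U`, a decomposition
`F(x₁,x₂,x₃) = g(h(x₁,x₂), x₃)` with C² functions `g, h` of two variables each,
iff `F` satisfies on `U` the PDE `F₃₁·F₂ = F₃₂·F₁`. -/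
theorem stmt_7
    (I : Fin 3 → Set ℝ) (hIopen : ∀ i, IsOpen (I i))
    (hIne : ∀ i, (I i).Nonempty) (hIconn : ∀ i, (I i).OrdConnected)
    (U : Set (Fin 3 → ℝ)) (hU : U = {x | ∀ i, x i ∈ I i})
    (F : (Fin 3 → ℝ) → ℝ) (hFsm : ContDiffOn ℝ 2 F U)
    (h1 : ∀ x ∈ U, fderiv ℝ F x (Pi.single 0 1) ≠ 0)
    (h2 : ∀ x ∈ U, fderiv ℝ F x (Pi.single 1 1) ≠ 0) :
    (∀ x ∈ U, ∃ V : Set (Fin 3 → ℝ), IsOpen V ∧ x ∈ V ∧ V ⊆ U ∧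
        ∃ h g : ℝ × ℝ → ℝ, ContDiff ℝ 2 h ∧ ContDiff ℝ 2 g ∧
          ∀ y ∈ V, F y = g (h (y 0, y 1), y 2)) ↔
      (∀ x ∈ U,
        fderiv ℝ (fun y => fderiv ℝ F y (Pi.single 0 1)) x (Pi.single 2 1) *
            fderiv ℝ F x (Pi.single 1 1) =
          fderiv ℝ (fun y => fderiv ℝ F y (Pi.single 1 1)) x (Pi.single 2 1) *
            fderiv ℝ F x (Pi.single 0 1)) :=
  stmt_7_general I hIopen hIconn U hU F hFsm h2
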